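/- arXiv:2104.10348 — 8 statements merged into one kernel-verified Lean document; each statement's English description precedes it below -/
import Mathlib

section
/- Let W be an n×n nonnegative row-stochastic matrix (each row sums to 1) that is not doubly stochastic (some column does not sum to 1). Then the linear operator D(x) = Wx is not θ-averaged with respect to the Euclidean norm for any θ ∈ (0,1). -/
/-!
An averaged operator is nonexpansive, so `x ↦ W x` is a contraction, and so is its adjoint
`x ↦ Wᵀ x`. Let `e` be the all-ones vector and `c := Wᵀ e` the vector of column sums. Since
`W e = e`, we get `⟪c, e⟫ = ⟪e, W e⟫ = ‖e‖²`, while `‖c‖ ≤ ‖e‖`; hence `‖c - e‖² ≤ 0`, so every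
column sums to `1`.
-/

open WithLp

theorem norm_sub_le_of_averaged {E : Type*} [NormedAddCommGroup E] [NormedSpace ℝ E]
    {θ : ℝ} (hθ0 : 0 ≤ θ) (hθ1 : θ ≤ 1) {f S : E → E}
    (hS : ∀ x y, ‖S x - S y‖ ≤ ‖x - y‖) (hf : ∀ x, f x = (1 - θ) • x + θ • S x) (x y : E) :
    ‖f x - f y‖ ≤ ‖x - y‖ := by
  have hsplit : f x - f y = (1 - θ) • (x - y) + θ • (S x - S y) := by
    rw [hf, hf]; module
  calc ‖f x - f y‖ ≤ (1 - θ) * ‖x - y‖ + θ * ‖S x - S y‖ := by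
        rw [hsplit]
        refine (norm_add_le _ _).trans_eq ?_
        rw [norm_smul, norm_smul, Real.norm_of_nonneg (sub_nonneg.mpr hθ1),
          Real.norm_of_nonneg hθ0]
    _ ≤ (1 - θ) * ‖x - y‖ + θ * ‖x - y‖ := by gcongr; exact hS x y
    _ = ‖x - y‖ := by ring

theorem LinearMap.norm_adjoint_apply_le {𝕜 E F : Type*} [RCLike 𝕜]
    [NormedAddCommGroup E] [InnerProductSpace 𝕜 E] [FiniteDimensional 𝕜 E]
    [NormedAddCommGroup F] [InnerProductSpace 𝕜 F] [FiniteDimensional 𝕜 F]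
    (f : E →ₗ[𝕜] F) (hf : ∀ x, ‖f x‖ ≤ ‖x‖) (y : F) :
    ‖f.adjoint y‖ ≤ ‖y‖ := by
  set z := f.adjoint y
  have hz : ‖z‖ * ‖z‖ ≤ ‖y‖ * ‖z‖ :=
    calc ‖z‖ * ‖z‖ = RCLike.re (inner 𝕜 z z) := (inner_self_eq_norm_mul_norm z).symm
      _ ≤ ‖inner 𝕜 z z‖ := RCLike.re_le_norm _
      _ = ‖inner 𝕜 y (f z)‖ := by rw [LinearMap.adjoint_inner_left]
      _ ≤ ‖y‖ * ‖f z‖ := norm_inner_le_norm _ _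
      _ ≤ ‖y‖ * ‖z‖ := by gcongr; exact hf z
  rcases (norm_nonneg z).eq_or_lt with hz0 | hz0
  · rw [← hz0]; exact norm_nonneg y
  · exact le_of_mul_le_mul_right hz hz0

theorem eq_of_norm_le_of_real_inner_eq_norm_sq {E : Type*} [NormedAddCommGroup E]
    [InnerProductSpace ℝ E] {c e : E} (hnorm : ‖c‖ ≤ ‖e‖) (hinner : inner ℝ c e = ‖e‖ ^ 2) :
    c = e := by
  have hsq : ‖c - e‖ ^ 2 ≤ 0 := by
    rw [norm_sub_sq_real, hinner]
    nlinarith [norm_nonneg c]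
  rw [← sub_eq_zero, ← norm_eq_zero]
  exact pow_eq_zero_iff two_ne_zero |>.mp (le_antisymm hsq (sq_nonneg _))

theorem stmt1_general {n : ℕ} (W : Matrix (Fin n) (Fin n) ℝ)
    (hrow : W.mulVec (fun _ => (1 : ℝ)) = fun _ => (1 : ℝ))
    (hnotcol : ∃ j, ∑ i, W i j ≠ 1) :
    ∀ θ ∈ Set.Ioo (0 : ℝ) 1,
      ¬ ∃ S : EuclideanSpace ℝ (Fin n) → EuclideanSpace ℝ (Fin n),
        (∀ x y, ‖S x - S y‖ ≤ ‖x - y‖) ∧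
        (∀ x, Matrix.toEuclideanLin W x = (1 - θ) • x + θ • S x) := by
  rintro θ ⟨hθ0, hθ1⟩ ⟨S, hS, hW⟩
  set A := Matrix.toEuclideanLin W
  have hA : ∀ x, ‖A x‖ ≤ ‖x‖ := fun x => by
    simpa using norm_sub_le_of_averaged hθ0.le hθ1.le hS hW x 0
  set e : EuclideanSpace ℝ (Fin n) := toLp 2 fun _ => 1
  have hAe : A e = e := congrArg (toLp 2) hrow
  have hcol : A.adjoint e = e :=
    eq_of_norm_le_of_real_inner_eq_norm_sq (A.norm_adjoint_apply_le hA e)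
      (by rw [LinearMap.adjoint_inner_left, hAe, real_inner_self_eq_norm_sq])
  obtain ⟨j, hj⟩ := hnotcol
  rw [← Matrix.toEuclideanLin_conjTranspose_eq_adjoint] at hcol
  simpa [e, Matrix.mulVec, dotProduct, hj] using congrArg (· j) hcol

/-- A nonnegative row-stochastic matrix that is not doubly stochastic is not
θ-averaged w.r.t. the Euclidean norm for any θ ∈ (0,1). -/
theorem stmt1 {n : ℕ} (W : Matrix (Fin n) (Fin n) ℝ)
    (hnonneg : ∀ i j, 0 ≤ W i j)
    (hrow : W.mulVec (fun _ => (1 : ℝ)) = fun _ => (1 : ℝ))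
    (hnotcol : ∃ j, ∑ i, W i j ≠ 1) :
    ∀ θ ∈ Set.Ioo (0 : ℝ) 1,
      ¬ ∃ S : EuclideanSpace ℝ (Fin n) → EuclideanSpace ℝ (Fin n),
        (∀ x y, ‖S x - S y‖ ≤ ‖x - y‖) ∧
        (∀ x, Matrix.toEuclideanLin W x = (1 - θ) • x + θ • S x) :=
  stmt1_general W hrow hnotcol
end

section
/- If W is an n×n nonnegative row-stochastic matrix and the Euclidean operator norm of W equals 1, and the linear map x ↦ Wx is nonexpansive in the Euclidean norm, then Wᵀe = e, where e is the all-ones vector; i.e., W is doubly stochastic. -/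
/-!
A fixed vector of a contraction on a Hilbert space is fixed by its adjoint: if `‖T‖ ≤ 1` and
`T v = v`, then `Re ⟪T† v, v⟫ = Re ⟪v, T v⟫ = ‖v‖²`, so
`‖T† v - v‖² = ‖T† v‖² - ‖v‖² ≤ 0` because `‖T†‖ = ‖T‖`.
Row-stochasticity says that `e` is fixed by `W`, and the adjoint of `W` on `ℓ²` is `Wᵀ`.
-/

open scoped InnerProductSpace

theorem ContinuousLinearMap.adjoint_apply_eq_self_of_norm_le_one {𝕜 E : Type*} [RCLike 𝕜]
    [NormedAddCommGroup E] [InnerProductSpace 𝕜 E] [CompleteSpace E] {T : E →L[𝕜] E}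
    (hT : ‖T‖ ≤ 1) {v : E} (hv : T v = v) : T.adjoint v = v := by
  have hre : RCLike.re ⟪T.adjoint v, v⟫_𝕜 = ‖v‖ ^ 2 := by
    rw [adjoint_inner_left, hv, inner_self_eq_norm_sq]
  have hle : ‖T.adjoint v‖ ≤ ‖v‖ :=
    calc ‖T.adjoint v‖ ≤ ‖T.adjoint‖ * ‖v‖ := T.adjoint.le_opNorm v
      _ = ‖T‖ * ‖v‖ := by rw [LinearIsometryEquiv.norm_map]
      _ ≤ ‖v‖ := mul_le_of_le_one_left (norm_nonneg v) hT
  have hsq : ‖T.adjoint v - v‖ ^ 2 = 0 := by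
    refine le_antisymm ?_ (sq_nonneg _)
    rw [norm_sub_sq (𝕜 := 𝕜), hre]
    nlinarith [norm_nonneg (T.adjoint v)]
  rwa [sq_eq_zero_iff, norm_eq_zero, sub_eq_zero] at hsq

theorem stmt2_general {n : ℕ} (W : Matrix (Fin n) (Fin n) ℝ)
    (hrow : W.mulVec (fun _ => (1 : ℝ)) = fun _ => (1 : ℝ))
    (hnorm : ‖LinearMap.toContinuousLinearMap (Matrix.toEuclideanLin W)‖ = 1) :
    W.transpose.mulVec (fun _ => (1 : ℝ)) = fun _ => (1 : ℝ) := by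
  set T := LinearMap.toContinuousLinearMap (Matrix.toEuclideanLin W)
  have hT : T (WithLp.toLp 2 fun _ => 1) = WithLp.toLp 2 fun _ => 1 := by
    simp [T, hrow]
  have hadj : T.adjoint = LinearMap.toContinuousLinearMap (Matrix.toEuclideanLin W.transpose) := by
    rw [← LinearMap.adjoint_toContinuousLinearMap, ← Matrix.toEuclideanLin_conjTranspose_eq_adjoint,
      Matrix.conjTranspose_eq_transpose_of_trivial]
  have hfixed := congrArg WithLp.ofLp (T.adjoint_apply_eq_self_of_norm_le_one hnorm.le hT)
  simpa [hadj] using hfixed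

/-- If W is nonnegative, row-stochastic, its Euclidean operator norm is 1 and
x ↦ Wx is nonexpansive in the Euclidean norm, then Wᵀe = e (W is doubly
stochastic). -/
theorem stmt2 {n : ℕ} (W : Matrix (Fin n) (Fin n) ℝ)
    (hnonneg : ∀ i j, 0 ≤ W i j)
    (hrow : W.mulVec (fun _ => (1 : ℝ)) = fun _ => (1 : ℝ))
    (hnorm : ‖LinearMap.toContinuousLinearMap (Matrix.toEuclideanLin W)‖ = 1)
    (hne : ∀ x : EuclideanSpace ℝ (Fin n), ‖Matrix.toEuclideanLin W x‖ ≤ ‖x‖) :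
    W.transpose.mulVec (fun _ => (1 : ℝ)) = fun _ => (1 : ℝ) :=
  stmt2_general W hrow hnorm
end

section
/- Let T : H → H be θ-averaged with θ ∈ (0,1) on a finite-dimensional real inner product space H, and suppose T has at least one fixed point. Then for any initialization x₀, the sequence defined by x_{k+1} = T(x_k) converges to some fixed point of T. -/
/-!
For a fixed point `z` of `S` (equivalently of `T`), the identity
`‖(1-θ)a + θb‖² + θ(1-θ)‖a-b‖² = (1-θ)‖a‖² + θ‖b‖²` with `a = x - z`, `b = S x - z` gives
`‖T x - z‖² + θ(1-θ)‖x - S x‖² ≤ ‖x - z‖²`. Along the iterates this telescopes, so the residuals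
`x_k - x_{k+1} = θ (x_k - S x_k)` are square-summable and tend to `0`. The iterates are Fejér
monotone with respect to every fixed point, hence bounded; by compactness a subsequence converges,
and asymptotic regularity makes its limit a fixed point. Fejér monotonicity with respect to that
limit then forces the whole sequence to converge to it.
-/

open Filter Topology Function

theorem tendsto_of_antitone_dist_of_mapClusterPt {X : Type*} [PseudoMetricSpace X]
    {u : ℕ → X} {a : X} (hmono : Antitone fun k => dist (u k) a)
    (hclust : MapClusterPt a atTop u) : Tendsto u atTop (𝓝 a) := by
  refine Metric.tendsto_atTop.2 fun ε hε => ?_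
  obtain ⟨N, hN⟩ := (hclust.frequently (Metric.ball_mem_nhds a hε)).exists
  exact ⟨N, fun k hk => (hmono hk).trans_lt hN⟩

theorem antitone_dist_iterate_of_isFixedPt {X : Type*} [PseudoMetricSpace X] {T : X → X}
    (hT : LipschitzWith 1 T) {z : X} (hz : IsFixedPt T z) (x : X) :
    Antitone fun k => dist (T^[k] x) z := by
  refine antitone_nat_of_succ_le fun k => ?_
  rw [iterate_succ_apply']
  simpa [hz.eq] using hT.dist_le_mul (T^[k] x) z

theorem exists_tendsto_iterate_of_tendsto_dist_iterate_succ {X : Type*} [MetricSpace X]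
    [ProperSpace X] {T : X → X} (hT : LipschitzWith 1 T) {z : X}
    (hz : IsFixedPt T z) {x : X}
    (hreg : Tendsto (fun k => dist (T^[k] x) (T^[k + 1] x)) atTop (𝓝 0)) :
    ∃ xstar, IsFixedPt T xstar ∧ Tendsto (fun k => T^[k] x) atTop (𝓝 xstar) := by
  have hbdd : ∀ k, T^[k] x ∈ Metric.closedBall z (dist x z) := fun k =>
    antitone_dist_iterate_of_isFixedPt hT hz x (Nat.zero_le k)
  obtain ⟨xstar, -, φ, hφ, hlim⟩ := tendsto_subseq_of_bounded Metric.isBounded_closedBall hbdd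
  have hlim_succ : Tendsto (fun n => T^[φ n + 1] x) atTop (𝓝 xstar) :=
    hlim.congr_dist (hreg.comp hφ.tendsto_atTop)
  have hlim_image : Tendsto (fun n => T^[φ n + 1] x) atTop (𝓝 (T xstar)) := by
    simpa only [iterate_succ_apply', comp_def] using (hT.continuous.tendsto xstar).comp hlim
  have hfix : IsFixedPt T xstar := tendsto_nhds_unique hlim_image hlim_succ
  exact ⟨xstar, hfix, tendsto_of_antitone_dist_of_mapClusterPt
    (antitone_dist_iterate_of_isFixedPt hT hfix x)
    (hlim.mapClusterPt.of_comp hφ.tendsto_atTop)⟩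

theorem summable_of_add_le_of_nonneg {a b : ℕ → ℝ} (ha : ∀ k, 0 ≤ a k) (hb : ∀ k, 0 ≤ b k)
    (h : ∀ k, a (k + 1) + b k ≤ a k) : Summable b := by
  have htel : ∀ n, ∑ k ∈ Finset.range n, b k + a n ≤ a 0 := by
    intro n
    induction n with
    | zero => simp
    | succ n ih => rw [Finset.sum_range_succ]; linarith [h n]
  exact summable_of_sum_range_le hb fun n => by linarith [htel n, ha n]

section Averaged

variable {H : Type*} [NormedAddCommGroup H] [InnerProductSpace ℝ H]

theorem norm_one_sub_smul_add_smul_sq (θ : ℝ) (a b : H) :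
    ‖(1 - θ) • a + θ • b‖ ^ 2 + θ * (1 - θ) * ‖a - b‖ ^ 2 = (1 - θ) * ‖a‖ ^ 2 + θ * ‖b‖ ^ 2 := by
  rw [norm_add_sq_real, norm_sub_sq_real, norm_smul, norm_smul, real_inner_smul_left,
    real_inner_smul_right, mul_pow, mul_pow, Real.norm_eq_abs, Real.norm_eq_abs, sq_abs, sq_abs]
  ring

def averagedMap (θ : ℝ) (S : H → H) : H → H := fun x => (1 - θ) • x + θ • S x

variable {θ : ℝ} {S : H → H}

theorem sub_averagedMap (θ : ℝ) (S : H → H) (x : H) :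
    x - averagedMap θ S x = θ • (x - S x) := by
  simp only [averagedMap]; module

theorem isFixedPt_averagedMap_iff (hθ : θ ≠ 0) {z : H} :
    IsFixedPt (averagedMap θ S) z ↔ IsFixedPt S z := by
  rw [IsFixedPt, IsFixedPt, ← sub_eq_zero, ← neg_sub, neg_eq_zero, sub_averagedMap, smul_eq_zero,
    sub_eq_zero, eq_comm (a := z)]
  simp only [hθ, false_or]

theorem lipschitzWith_one_averagedMap (hθ : θ ∈ Set.Icc 0 1) (hS : LipschitzWith 1 S) :
    LipschitzWith 1 (averagedMap θ S) := by
  refine lipschitzWith_iff_norm_sub_le.2 fun x y => ?_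
  rw [NNReal.coe_one, one_mul]
  calc ‖averagedMap θ S x - averagedMap θ S y‖
      = ‖(1 - θ) • (x - y) + θ • (S x - S y)‖ := by simp only [averagedMap]; congr 1; module
    _ ≤ ‖(1 - θ) • (x - y)‖ + ‖θ • (S x - S y)‖ := norm_add_le _ _
    _ = (1 - θ) * ‖x - y‖ + θ * ‖S x - S y‖ := by
        rw [norm_smul, norm_smul, Real.norm_of_nonneg (sub_nonneg.2 hθ.2), Real.norm_of_nonneg hθ.1]
    _ ≤ (1 - θ) * ‖x - y‖ + θ * ‖x - y‖ := by
        gcongr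
        · exact hθ.1
        · simpa using hS.norm_sub_le x y
    _ = ‖x - y‖ := by ring

theorem norm_averagedMap_sub_sq_add_le (hθ : 0 ≤ θ) (hS : LipschitzWith 1 S) {z : H}
    (hz : IsFixedPt S z) (w : H) :
    ‖averagedMap θ S w - z‖ ^ 2 + θ * (1 - θ) * ‖w - S w‖ ^ 2 ≤ ‖w - z‖ ^ 2 := by
  have hSw : ‖S w - z‖ ≤ ‖w - z‖ := by simpa [hz.eq] using hS.norm_sub_le w z
  have h := norm_one_sub_smul_add_smul_sq θ (w - z) (S w - z)
  rw [show (1 - θ) • (w - z) + θ • (S w - z) = averagedMap θ S w - z by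
      simp only [averagedMap]; module, sub_sub_sub_cancel_right] at h
  nlinarith [mul_le_mul_of_nonneg_left (pow_le_pow_left₀ (norm_nonneg _) hSw 2) hθ]

theorem tendsto_dist_iterate_averagedMap_succ (hθ : θ ∈ Set.Ioo 0 1) (hS : LipschitzWith 1 S)
    {z : H} (hz : IsFixedPt S z) (x : H) :
    Tendsto (fun k => dist ((averagedMap θ S)^[k] x) ((averagedMap θ S)^[k + 1] x))
      atTop (𝓝 0) := by
  set u := fun k => (averagedMap θ S)^[k] x
  have hsum : Summable fun k => θ * (1 - θ) * ‖u k - S (u k)‖ ^ 2 :=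
    summable_of_add_le_of_nonneg (a := fun k => ‖u k - z‖ ^ 2) (fun _ => sq_nonneg _)
      (fun _ => mul_nonneg (mul_nonneg hθ.1.le (sub_nonneg.2 hθ.2.le)) (sq_nonneg _)) fun k => by
        simpa only [u, iterate_succ_apply'] using
          norm_averagedMap_sub_sq_add_le hθ.1.le hS hz (u k)
  have hres : Tendsto (fun k => ‖u k - S (u k)‖ ^ 2) atTop (𝓝 0) :=
    ((summable_mul_left_iff (mul_pos hθ.1 (sub_pos.2 hθ.2)).ne').1 hsum).tendsto_atTop_zero
  have hdist : ∀ k, dist (u k) (u (k + 1)) = θ * √(‖u k - S (u k)‖ ^ 2) := fun k => by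
    rw [Real.sqrt_sq (norm_nonneg _), dist_eq_norm, show u (k + 1) = averagedMap θ S (u k) from
      iterate_succ_apply' _ _ _, sub_averagedMap, norm_smul, Real.norm_of_nonneg hθ.1.le]
  have hlim := hres.sqrt.const_mul θ
  rw [Real.sqrt_zero, mul_zero] at hlim
  exact hlim.congr fun k => (hdist k).symm

end Averaged

/-- Krasnosel'skii–Mann: iterates of a θ-averaged operator with a fixed point
converge to a fixed point (finite-dimensional real inner product space). -/
theorem stmt4 {H : Type*} [NormedAddCommGroup H] [InnerProductSpace ℝ H]
    [FiniteDimensional ℝ H]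
    (T : H → H) (θ : ℝ) (hθ : θ ∈ Set.Ioo (0 : ℝ) 1)
    (S : H → H) (hS : ∀ x y, ‖S x - S y‖ ≤ ‖x - y‖)
    (hT : ∀ x, T x = (1 - θ) • x + θ • S x)
    (hfix : ∃ x, T x = x) (x₀ : H) :
    ∃ xstar : H, T xstar = xstar ∧
      Filter.Tendsto (fun k => T^[k] x₀) Filter.atTop (nhds xstar) := by
  obtain rfl : T = averagedMap θ S := funext hT
  have hS_lip : LipschitzWith 1 S :=
    lipschitzWith_iff_norm_sub_le.2 fun x y => by simpa using hS x y
  obtain ⟨z, hz⟩ := hfix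
  have hSz : IsFixedPt S z := (isFixedPt_averagedMap_iff hθ.1.ne').1 hz
  exact exists_tendsto_iterate_of_tendsto_dist_iterate_succ
    (lipschitzWith_one_averagedMap (Set.Ioo_subset_Icc_self hθ) hS_lip) hz
    (tendsto_dist_iterate_averagedMap_succ hθ hS_lip hSz x₀)
end

section
/- Let f : H → R be convex and differentiable with β-Lipschitz gradient on a real inner product space H. Then f is cocoercive: for all x, y, ⟨∇f(x) − ∇f(y), x − y⟩ ≥ (1/β)‖∇f(x) − ∇f(y)‖². -/
/-!
The Bregman divergence `D(x, y) = f y - f x - ⟪∇f x, y - x⟫` is at least `‖∇f y - ∇f x‖² / (2β)`: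
the function `g = f - ⟪∇f x, ·⟫` is convex and `β`-smooth with `∇g x = 0`, so `x` minimises `g`,
while by the descent lemma the gradient step `y - β⁻¹ ∇g y` lowers `g y` by `‖∇g y‖² / (2β)`.
Adding `D(x, y)` and `D(y, x)` gives the cocoercivity inequality.
-/

open Set InnerProductSpace

section

variable {H : Type*} [NormedAddCommGroup H] [InnerProductSpace ℝ H] [CompleteSpace H]
  {f : H → ℝ} {f' : H → H} {β : ℝ}

def bregmanDiv (f : H → ℝ) (f' : H → H) (x y : H) : ℝ :=
  f y - f x - inner ℝ (f' x) (y - x)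

omit [CompleteSpace H] in
lemma bregmanDiv_add_bregmanDiv_swap (x y : H) :
    bregmanDiv f f' x y + bregmanDiv f f' y x = inner ℝ (f' x - f' y) (x - y) := by
  simp only [bregmanDiv, inner_sub_left, inner_sub_right]
  ring

lemma HasGradientAt.hasDerivAt_add_smul {g x v : H} {t : ℝ}
    (hf : HasGradientAt f g (x + t • v)) :
    HasDerivAt (fun s : ℝ => f (x + s • v)) (inner ℝ g v) t := by
  have hline : HasDerivAt (fun s : ℝ => x + s • v) v t := by
    simpa using ((hasDerivAt_id t).smul_const v).const_add x
  exact hf.hasFDerivAt.comp_hasDerivAt t hline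

lemma ConvexOn.add_inner_le_of_hasGradientAt (hconv : ConvexOn ℝ univ f) {g x : H}
    (hf : HasGradientAt f g x) (y : H) : f x + inner ℝ g (y - x) ≤ f y := by
  have hline : ConvexOn ℝ univ (fun s : ℝ => f (x + s • (y - x))) := by
    have hfun : (fun s : ℝ => f (x + s • (y - x))) = f ∘ AffineMap.lineMap x y := by
      ext s
      rw [Function.comp_apply, AffineMap.lineMap_apply, vsub_eq_sub, vadd_eq_add, add_comm]
    simpa only [hfun, preimage_univ] using hconv.comp_affineMap (AffineMap.lineMap x y)
  have hderiv : HasDerivAt (fun s : ℝ => f (x + s • (y - x))) (inner ℝ g (y - x)) 0 :=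
    HasGradientAt.hasDerivAt_add_smul (by simpa using hf)
  have := hline.le_slope_of_hasDerivAt (mem_univ 0) (mem_univ 1) one_pos hderiv
  simp only [slope_def_field, zero_smul, one_smul, add_zero, add_sub_cancel, sub_zero,
    div_one] at this
  linarith

lemma le_add_inner_add_of_lipschitz_gradient (hdiff : ∀ z, HasGradientAt f (f' z) z) {x : H}
    (hlip : ∀ z, ‖f' z - f' x‖ ≤ β * ‖z - x‖) (y : H) :
    f y ≤ f x + inner ℝ (f' x) (y - x) + β / 2 * ‖y - x‖ ^ 2 := by
  set v := y - x
  set φ : ℝ → ℝ := fun t => f (x + t • v) - t * inner ℝ (f' x) v - β / 2 * t ^ 2 * ‖v‖ ^ 2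
  have hφ : ∀ t, HasDerivAt φ (inner ℝ (f' (x + t • v) - f' x) v - β * t * ‖v‖ ^ 2) t := by
    intro t
    have hlin : HasDerivAt (fun s : ℝ => s * inner ℝ (f' x) v) (inner ℝ (f' x) v) t := by
      simpa using (hasDerivAt_id t).mul_const (inner ℝ (f' x) v)
    have hquad : HasDerivAt (fun s : ℝ => β / 2 * s ^ 2 * ‖v‖ ^ 2) (β * t * ‖v‖ ^ 2) t :=
      (((hasDerivAt_pow 2 t).const_mul (β / 2)).mul_const (‖v‖ ^ 2)).congr_deriv
        (by push_cast [Nat.add_one_sub_one, pow_one]; ring)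
    exact (((hdiff _).hasDerivAt_add_smul.sub hlin).sub hquad).congr_deriv
      (by rw [inner_sub_left])
  have hanti : AntitoneOn φ (Icc 0 1) := by
    refine antitoneOn_of_deriv_nonpos (convex_Icc 0 1)
      (fun t _ => (hφ t).continuousAt.continuousWithinAt)
      (fun t _ => (hφ t).differentiableAt.differentiableWithinAt) fun t ht => ?_
    rw [interior_Icc] at ht
    rw [(hφ t).deriv, sub_nonpos]
    calc inner ℝ (f' (x + t • v) - f' x) v
        ≤ ‖f' (x + t • v) - f' x‖ * ‖v‖ := real_inner_le_norm _ _
      _ ≤ β * ‖x + t • v - x‖ * ‖v‖ := by gcongr; exact hlip _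
      _ = β * t * ‖v‖ ^ 2 := by
        rw [add_sub_cancel_left, norm_smul, Real.norm_of_nonneg ht.1.le]; ring
  have := hanti (left_mem_Icc.2 zero_le_one) (right_mem_Icc.2 zero_le_one) zero_le_one
  simp only [φ, v, zero_smul, one_smul, add_zero, add_sub_cancel] at this
  linarith

lemma apply_sub_inv_smul_gradient_le (hdiff : ∀ z, HasGradientAt f (f' z) z) {y : H}
    (hlip : ∀ z, ‖f' z - f' y‖ ≤ β * ‖z - y‖) :
    f (y - β⁻¹ • f' y) ≤ f y - (2 * β)⁻¹ * ‖f' y‖ ^ 2 := by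
  have h := le_add_inner_add_of_lipschitz_gradient hdiff hlip (y - β⁻¹ • f' y)
  have hcoef : β / 2 * (β⁻¹) ^ 2 - β⁻¹ = -(2 * β)⁻¹ := by
    rcases eq_or_ne β 0 with rfl | hβ
    · simp
    · field_simp; ring
  rw [sub_sub_cancel_left, inner_neg_right, real_inner_smul_right, real_inner_self_eq_norm_sq,
    norm_neg, norm_smul, Real.norm_eq_abs, mul_pow, sq_abs] at h
  linarith [congrArg (· * ‖f' y‖ ^ 2) hcoef]

lemma ConvexOn.inv_two_mul_norm_sq_le_bregmanDiv (hconv : ConvexOn ℝ univ f)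
    (hdiff : ∀ z, HasGradientAt f (f' z) z) (hlip : ∀ x y, ‖f' x - f' y‖ ≤ β * ‖x - y‖)
    (x y : H) : (2 * β)⁻¹ * ‖f' y - f' x‖ ^ 2 ≤ bregmanDiv f f' x y := by
  set ℓ := toDual ℝ H (f' x)
  have hg : ∀ z, HasGradientAt (f - ⇑ℓ) (f' z - f' x) z := fun z => by
    rw [hasGradientAt_iff_hasFDerivAt, map_sub]
    exact (hdiff z).hasFDerivAt.sub ℓ.hasFDerivAt
  have hgconv : ConvexOn ℝ univ (f - ⇑ℓ) := hconv.sub (ℓ.toLinearMap.concaveOn convex_univ)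
  have hmin := hgconv.add_inner_le_of_hasGradientAt (sub_self (f' x) ▸ hg x)
    (y - β⁻¹ • (f' y - f' x))
  have hstep := apply_sub_inv_smul_gradient_le hg (y := y) fun z => by
    simpa only [sub_sub_sub_cancel_right] using hlip z y
  simp only [inner_zero_left, add_zero, Pi.sub_apply, ℓ, toDual_apply_apply] at hmin hstep
  rw [bregmanDiv, inner_sub_right]
  linarith

end

theorem stmt5_general {H : Type*} [NormedAddCommGroup H] [InnerProductSpace ℝ H] [CompleteSpace H]
    (f : H → ℝ) (f' : H → H) (β : ℝ)
    (hconv : ConvexOn ℝ Set.univ f)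
    (hdiff : ∀ x, HasGradientAt f (f' x) x)
    (hlip : ∀ x y, ‖f' x - f' y‖ ≤ β * ‖x - y‖) :
    ∀ x y : H, (1 / β) * ‖f' x - f' y‖ ^ 2 ≤ (inner ℝ (f' x - f' y) (x - y) : ℝ) := by
  intro x y
  calc 1 / β * ‖f' x - f' y‖ ^ 2
      = (2 * β)⁻¹ * ‖f' y - f' x‖ ^ 2 + (2 * β)⁻¹ * ‖f' x - f' y‖ ^ 2 := by
        rw [norm_sub_rev (f' y)]; ring
    _ ≤ bregmanDiv f f' x y + bregmanDiv f f' y x :=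
        add_le_add (hconv.inv_two_mul_norm_sq_le_bregmanDiv hdiff hlip x y)
          (hconv.inv_two_mul_norm_sq_le_bregmanDiv hdiff hlip y x)
    _ = inner ℝ (f' x - f' y) (x - y) := bregmanDiv_add_bregmanDiv_swap x y

/-- Baillon–Haddad: a convex differentiable function with β-Lipschitz gradient
is (1/β)-cocoercive. -/
theorem stmt5 {H : Type*} [NormedAddCommGroup H] [InnerProductSpace ℝ H] [CompleteSpace H]
    (f : H → ℝ) (f' : H → H) (β : ℝ) (hβ : 0 < β)
    (hconv : ConvexOn ℝ Set.univ f)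
    (hdiff : ∀ x, HasGradientAt f (f' x) x)
    (hlip : ∀ x y, ‖f' x - f' y‖ ≤ β * ‖x - y‖) :
    ∀ x y : H, (1 / β) * ‖f' x - f' y‖ ^ 2 ≤ (inner ℝ (f' x - f' y) (x - y) : ℝ) :=
  stmt5_general f f' β hconv hdiff hlip
end

section
/- Let f be convex and β-smooth, D be θ-averaged (θ ∈ (0,1)) on (R^n, ⟨·,·⟩), ρ > β/2, and suppose T = D ∘ (I − ρ⁻¹∇f) has a fixed point. Then for any x₀, the PnP-ISTA iterates x_{k+1} = D(x_k − ρ⁻¹∇f(x_k)) converge to a fixed point of T. -/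
/-!
For convex `f` with `β`-Lipschitz gradient, the Baillon–Haddad inequality makes `∇f`
`β⁻¹`-cocoercive, so the gradient step `I - ρ⁻¹∇f` is averaged once `ρ > β / 2`.
A composition of averaged operators is averaged, and the iterates of an averaged operator with
a fixed point satisfy `‖x_{k+1} - z‖² + c ‖x_k - T x_k‖² ≤ ‖x_k - z‖²` for every fixed point `z`:
they stay bounded and their residuals vanish, so in finite dimension a cluster point exists,
is fixed, and (the distance to it being nonincreasing) is the limit (Krasnosel'skii–Mann).
-/

open Set Filter Topology Function
open scoped RealInnerProductSpace

section Averaged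

variable {E : Type*} [NormedAddCommGroup E]

/-- With `c = (1 - α) / α` this is the usual characterization of `α`-averaged operators
`T = (1 - α) I + α S`, `S` nonexpansive. -/
def IsAveraged (c : ℝ) (T : E → E) : Prop :=
  ∀ x y, ‖T x - T y‖ ^ 2 + c * ‖(x - T x) - (y - T y)‖ ^ 2 ≤ ‖x - y‖ ^ 2

variable {c c₁ c₂ : ℝ} {T T₁ T₂ : E → E}

theorem IsAveraged.lipschitzWith (hT : IsAveraged c T) (hc : 0 ≤ c) : LipschitzWith 1 T := by
  refine LipschitzWith.of_dist_le_mul fun x y => ?_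
  rw [NNReal.coe_one, one_mul, dist_eq_norm, dist_eq_norm]
  have hsq : ‖T x - T y‖ ^ 2 ≤ ‖x - y‖ ^ 2 := by
    nlinarith [hT x y, mul_nonneg hc (sq_nonneg ‖(x - T x) - (y - T y)‖)]
  exact (pow_le_pow_iff_left₀ (norm_nonneg _) (norm_nonneg _) two_ne_zero).1 hsq

theorem IsAveraged.comp (h₂ : IsAveraged c₂ T₂) (h₁ : IsAveraged c₁ T₁) (hc₁ : 0 ≤ c₁)
    (hc₂ : 0 ≤ c₂) : IsAveraged (min c₁ c₂ / 2) (T₂ ∘ T₁) := by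
  intro x y
  set r₁ := (x - T₁ x) - (y - T₁ y)
  set r₂ := (T₁ x - T₂ (T₁ x)) - (T₁ y - T₂ (T₁ y))
  have hr : (x - (T₂ ∘ T₁) x) - (y - (T₂ ∘ T₁) y) = r₁ + r₂ := by
    simp only [comp_apply, r₁, r₂]; abel
  have hsq : ‖r₁ + r₂‖ ^ 2 ≤ 2 * ‖r₁‖ ^ 2 + 2 * ‖r₂‖ ^ 2 := by
    nlinarith [norm_add_le r₁ r₂, norm_nonneg (r₁ + r₂), sq_nonneg (‖r₁‖ - ‖r₂‖)]
  have hmin : min c₁ c₂ / 2 * ‖r₁ + r₂‖ ^ 2 ≤ c₁ * ‖r₁‖ ^ 2 + c₂ * ‖r₂‖ ^ 2 := by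
    calc min c₁ c₂ / 2 * ‖r₁ + r₂‖ ^ 2 ≤ min c₁ c₂ / 2 * (2 * ‖r₁‖ ^ 2 + 2 * ‖r₂‖ ^ 2) := by
          gcongr
      _ = min c₁ c₂ * ‖r₁‖ ^ 2 + min c₁ c₂ * ‖r₂‖ ^ 2 := by ring
      _ ≤ c₁ * ‖r₁‖ ^ 2 + c₂ * ‖r₂‖ ^ 2 := by
          gcongr; exacts [min_le_left _ _, min_le_right _ _]
  rw [hr, comp_apply, comp_apply]
  linarith [h₁ x y, h₂ (T₁ x) (T₁ y)]

theorem LipschitzWith.antitone_dist_iterate (hT : LipschitzWith 1 T) {z : E}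
    (hz : IsFixedPt T z) (x : E) : Antitone fun k => dist (T^[k] x) z :=
  antitone_nat_of_succ_le fun k => by
    rw [iterate_succ_apply']
    simpa [hz.eq] using hT.dist_le_mul (T^[k] x) z

theorem IsAveraged.tendsto_iterate_sub_apply (hT : IsAveraged c T) (hc : 0 < c) {z : E}
    (hz : IsFixedPt T z) (x : E) :
    Tendsto (fun k => T^[k] x - T (T^[k] x)) atTop (𝓝 0) := by
  set a : ℕ → ℝ := fun k => ‖T^[k] x - z‖ ^ 2
  have hstep : ∀ k, a (k + 1) + c * ‖T^[k] x - T (T^[k] x)‖ ^ 2 ≤ a k := fun k => by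
    simpa [a, iterate_succ_apply', hz.eq] using hT (T^[k] x) z
  have ha : Antitone a := antitone_nat_of_succ_le fun k => by
    nlinarith [hstep k, sq_nonneg ‖T^[k] x - T (T^[k] x)‖]
  have hlim := tendsto_atTop_ciInf ha ⟨0, by rintro _ ⟨k, rfl⟩; positivity⟩
  have hdiff : Tendsto (fun k => c⁻¹ * (a k - a (k + 1))) atTop (𝓝 0) := by
    simpa using ((hlim.sub (hlim.comp (tendsto_add_atTop_nat 1))).const_mul c⁻¹)
  have hsq : Tendsto (fun k => ‖T^[k] x - T (T^[k] x)‖ ^ 2) atTop (𝓝 0) :=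
    squeeze_zero (fun k => sq_nonneg _)
      (fun k => by rw [le_inv_mul_iff₀ hc]; linarith [hstep k]) hdiff
  rw [tendsto_zero_iff_norm_tendsto_zero]
  simpa using hsq.sqrt

theorem IsAveraged.exists_tendsto_iterate_isFixedPt [ProperSpace E] (hT : IsAveraged c T)
    (hc : 0 < c) (hfix : ∃ z, IsFixedPt T z) (x : E) :
    ∃ p, IsFixedPt T p ∧ Tendsto (fun k => T^[k] x) atTop (𝓝 p) := by
  obtain ⟨z, hz⟩ := hfix
  have hT1 := hT.lipschitzWith hc.le
  have hbdd : ∀ k, T^[k] x ∈ Metric.closedBall z (dist x z) := fun k =>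
    hT1.antitone_dist_iterate hz x (Nat.zero_le k)
  obtain ⟨p, -, φ, hφ, hsub⟩ := (isCompact_closedBall z _).tendsto_subseq hbdd
  have hp : IsFixedPt T p := by
    have h₁ := (hT.tendsto_iterate_sub_apply hc hz x).comp hφ.tendsto_atTop
    have h₂ := hsub.sub ((hT1.continuous.tendsto p).comp hsub)
    exact (sub_eq_zero.1 (tendsto_nhds_unique h₂ h₁)).symm
  refine ⟨p, hp, tendsto_iff_dist_tendsto_zero.2 ?_⟩
  exact (tendsto_iff_tendsto_subseq_of_antitone (hT1.antitone_dist_iterate hp x)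
    hφ.tendsto_atTop).2 (tendsto_iff_dist_tendsto_zero.1 hsub)

end Averaged

section InnerProduct

variable {H : Type*} [NormedAddCommGroup H] [InnerProductSpace ℝ H]

def Cocoercive (κ : ℝ) (F : H → H) : Prop :=
  ∀ x y, κ * ‖F x - F y‖ ^ 2 ≤ ⟪F x - F y, x - y⟫

theorem isAveraged_one_sub_smul_add_smul {θ : ℝ} (hθ : 0 < θ) {S : H → H}
    (hS : LipschitzWith 1 S) : IsAveraged ((1 - θ) / θ) fun x => (1 - θ) • x + θ • S x := by
  intro x y
  set a := x - y
  set d := a - (S x - S y)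
  have hT : ((1 - θ) • x + θ • S x) - ((1 - θ) • y + θ • S y) = a - θ • d := by
    simp only [a, d]; module
  have hr : (x - ((1 - θ) • x + θ • S x)) - (y - ((1 - θ) • y + θ • S y)) = θ • d := by
    simp only [a, d]; module
  have hS' : ‖a - d‖ ≤ ‖a‖ := by simpa [a, d] using hS.norm_sub_le x y
  rw [hT, hr, norm_sub_sq_real, real_inner_smul_right, norm_smul, Real.norm_eq_abs,
    abs_of_pos hθ]
  have : (1 - θ) / θ * (θ * ‖d‖) ^ 2 = (1 - θ) * θ * ‖d‖ ^ 2 := by field_simp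
  rw [this]
  nlinarith [pow_le_pow_left₀ (norm_nonneg _) hS' 2, norm_sub_sq_real a d]

theorem isAveraged_sub_smul_of_cocoercive {κ γ : ℝ} (hγ : 0 < γ) {F : H → H}
    (hF : Cocoercive κ F) : IsAveraged (2 * κ / γ - 1) fun x => x - γ • F x := by
  intro x y
  set Δ := F x - F y
  have hT : (x - γ • F x) - (y - γ • F y) = (x - y) - γ • Δ := by simp only [Δ]; module
  have hr : (x - (x - γ • F x)) - (y - (y - γ • F y)) = γ • Δ := by simp only [Δ]; module
  rw [hT, hr, norm_sub_sq_real, real_inner_smul_right, norm_smul, Real.norm_eq_abs,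
    abs_of_pos hγ, real_inner_comm]
  have : (2 * κ / γ - 1) * (γ * ‖Δ‖) ^ 2 = 2 * γ * (κ * ‖Δ‖ ^ 2) - (γ * ‖Δ‖) ^ 2 := by
    field_simp
  rw [this]
  nlinarith [hF x y]

variable [CompleteSpace H] {f : H → ℝ} {f' : H → H} {β : ℝ}

theorem HasGradientAt.hasDerivAt_comp_add_smul {g x d : H} {t : ℝ}
    (h : HasGradientAt f g (x + t • d)) :
    HasDerivAt (fun s : ℝ => f (x + s • d)) ⟪g, d⟫ t := by
  have hline : HasDerivAt (fun s : ℝ => x + s • d) d t := by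
    simpa using ((hasDerivAt_id t).smul_const d).const_add x
  have h := (hasGradientAt_iff_hasFDerivAt.mp h).comp_hasDerivAt t hline
  simp only [InnerProductSpace.toDual_apply_apply] at h
  exact h

theorem ConvexOn.add_inner_gradient_le (hf : ConvexOn ℝ univ f) {g x : H}
    (h : HasGradientAt f g x) (y : H) : f x + ⟪g, y - x⟫ ≤ f y := by
  have hline : ConvexOn ℝ univ (fun s : ℝ => f (x + s • (y - x))) := by
    have e : (fun s : ℝ => f (x + s • (y - x))) = f ∘ AffineMap.lineMap x y := by
      ext s
      simp [AffineMap.lineMap_apply_module', add_comm]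
    simpa [e] using hf.comp_affineMap (AffineMap.lineMap x y)
  have hderiv : HasDerivAt (fun s : ℝ => f (x + s • (y - x))) ⟪g, y - x⟫ 0 :=
    HasGradientAt.hasDerivAt_comp_add_smul (by simpa using h)
  have := hline.le_slope_of_hasDerivAt (mem_univ 0) (mem_univ 1) zero_lt_one hderiv
  simp only [slope_def_field, one_smul, zero_smul, add_zero, sub_zero, div_one,
    add_sub_cancel] at this
  linarith

theorem le_add_inner_gradient_add_sq (hf : ∀ x, HasGradientAt f (f' x) x)
    (hlip : ∀ x y, ‖f' x - f' y‖ ≤ β * ‖x - y‖) (x y : H) :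
    f y ≤ f x + ⟪f' x, y - x⟫ + β / 2 * ‖y - x‖ ^ 2 := by
  set d := y - x
  set φ : ℝ → ℝ := fun t => f (x + t • d) - t * ⟪f' x, d⟫ - β / 2 * t ^ 2 * ‖d‖ ^ 2
  have hφ : ∀ t, HasDerivAt φ (⟪f' (x + t • d) - f' x, d⟫ - β * t * ‖d‖ ^ 2) t := by
    intro t
    have hlin := (hasDerivAt_id t).mul_const ⟪f' x, d⟫
    have hquad := ((hasDerivAt_pow 2 t).const_mul (β / 2)).mul_const (‖d‖ ^ 2)
    exact (((hf (x + t • d)).hasDerivAt_comp_add_smul.sub hlin).sub hquad).congr_deriv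
      (by rw [inner_sub_left]; push_cast; ring)
  have hderiv_nonpos : ∀ t ∈ interior (Icc (0 : ℝ) 1),
      ⟪f' (x + t • d) - f' x, d⟫ - β * t * ‖d‖ ^ 2 ≤ 0 := by
    intro t ht
    rw [interior_Icc] at ht
    have hgrad : ‖f' (x + t • d) - f' x‖ ≤ β * (t * ‖d‖) := by
      simpa [norm_smul, abs_of_pos ht.1] using hlip (x + t • d) x
    refine sub_nonpos.2 ?_
    calc ⟪f' (x + t • d) - f' x, d⟫ ≤ ‖f' (x + t • d) - f' x‖ * ‖d‖ := real_inner_le_norm _ _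
      _ ≤ β * (t * ‖d‖) * ‖d‖ := by gcongr
      _ = β * t * ‖d‖ ^ 2 := by ring
  have hanti : AntitoneOn φ (Icc 0 1) :=
    antitoneOn_of_hasDerivWithinAt_nonpos (convex_Icc 0 1)
      (continuous_iff_continuousAt.2 fun t => (hφ t).continuousAt).continuousOn
      (fun t _ => (hφ t).hasDerivWithinAt) hderiv_nonpos
  have := hanti (left_mem_Icc.2 zero_le_one) (right_mem_Icc.2 zero_le_one) zero_le_one
  simp only [φ, one_smul, zero_smul, add_zero, add_sub_cancel, d] at this
  linarith

theorem ConvexOn.add_inner_gradient_add_sq_le (hf : ConvexOn ℝ univ f) (hβ : 0 < β)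
    (hgrad : ∀ x, HasGradientAt f (f' x) x) (hlip : ∀ x y, ‖f' x - f' y‖ ≤ β * ‖x - y‖)
    (x y : H) : f x + ⟪f' x, y - x⟫ + ‖f' y - f' x‖ ^ 2 / (2 * β) ≤ f y := by
  set Δ := f' y - f' x
  -- `w` minimizes the quadratic upper bound of `f - ⟪f' x, ·⟫` around `y`.
  set w := y - β⁻¹ • Δ
  have hlower := hf.add_inner_gradient_le (hgrad x) w
  have hupper := le_add_inner_gradient_add_sq hgrad hlip y w
  have hwx : w - x = (y - x) - β⁻¹ • Δ := sub_right_comm _ _ _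
  have hwy : w - y = -(β⁻¹ • Δ) := by simp [w]
  have hΔ : ⟪f' y, Δ⟫ - ⟪f' x, Δ⟫ = ‖Δ‖ ^ 2 := by
    rw [← inner_sub_left, real_inner_self_eq_norm_sq]
  rw [hwx, inner_sub_right, real_inner_smul_right] at hlower
  rw [hwy, inner_neg_right, real_inner_smul_right, norm_neg, norm_smul, Real.norm_eq_abs,
    abs_of_pos (inv_pos.2 hβ)] at hupper
  have key : β / 2 * (β⁻¹ * ‖Δ‖) ^ 2 = β⁻¹ * ‖Δ‖ ^ 2 - ‖Δ‖ ^ 2 / (2 * β) := by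
    field_simp; ring
  rw [key] at hupper
  linear_combination hlower + hupper - β⁻¹ * hΔ

theorem ConvexOn.cocoercive_gradient (hf : ConvexOn ℝ univ f) (hβ : 0 < β)
    (hgrad : ∀ x, HasGradientAt f (f' x) x) (hlip : ∀ x y, ‖f' x - f' y‖ ≤ β * ‖x - y‖) :
    Cocoercive β⁻¹ f' := by
  intro x y
  have hxy := hf.add_inner_gradient_add_sq_le hβ hgrad hlip x y
  have hyx := hf.add_inner_gradient_add_sq_le hβ hgrad hlip y x
  have hsum : ⟪f' x, y - x⟫ + ⟪f' y, x - y⟫ = -⟪f' x - f' y, x - y⟫ := by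
    rw [← neg_sub x y, inner_neg_right, inner_sub_left]; ring
  rw [norm_sub_rev] at hxy
  have : β⁻¹ * ‖f' x - f' y‖ ^ 2 = 2 * (‖f' x - f' y‖ ^ 2 / (2 * β)) := by field_simp
  linarith

end InnerProduct

/-- Fixed-point convergence of PnP-ISTA: for convex β-smooth f, θ-averaged
denoiser D and ρ > β/2, if T = D ∘ (I − ρ⁻¹∇f) has a fixed point then the
iterates x_{k+1} = D(x_k − ρ⁻¹∇f(x_k)) converge to a fixed point of T. -/
theorem stmt9 {H : Type*} [NormedAddCommGroup H] [InnerProductSpace ℝ H]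
    [FiniteDimensional ℝ H]
    (f : H → ℝ) (f' : H → H)
    (β ρ : ℝ) (hβ : 0 < β) (hρ : β / 2 < ρ)
    (hconv : ConvexOn ℝ Set.univ f)
    (hdiff : ∀ x, HasGradientAt f (f' x) x)
    (hlip : ∀ x y, ‖f' x - f' y‖ ≤ β * ‖x - y‖)
    (D : H → H) (θ : ℝ) (hθ : θ ∈ Set.Ioo (0 : ℝ) 1)
    (S : H → H) (hS : ∀ x y, ‖S x - S y‖ ≤ ‖x - y‖)
    (hD : ∀ x, D x = (1 - θ) • x + θ • S x)
    (T : H → H) (hT : ∀ x, T x = D (x - ρ⁻¹ • f' x))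
    (hfix : ∃ x, T x = x) (x₀ : H) :
    ∃ xstar, T xstar = xstar ∧
      Filter.Tendsto (fun k => T^[k] x₀) Filter.atTop (nhds xstar) := by
  have hρ₀ : 0 < ρ := (half_pos hβ).trans hρ
  have hstep : IsAveraged (2 * β⁻¹ / ρ⁻¹ - 1) fun x => x - ρ⁻¹ • f' x :=
    isAveraged_sub_smul_of_cocoercive (inv_pos.2 hρ₀) (hconv.cocoercive_gradient hβ hdiff hlip)
  have hstep_pos : 0 < 2 * β⁻¹ / ρ⁻¹ - 1 := by
    rw [show 2 * β⁻¹ / ρ⁻¹ - 1 = (2 * ρ - β) / β by field_simp]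
    exact div_pos (by linarith) hβ
  have hdenoiser : IsAveraged ((1 - θ) / θ) D := by
    rw [funext hD]
    exact isAveraged_one_sub_smul_add_smul hθ.1
      (LipschitzWith.of_dist_le_mul fun x y => by simpa [dist_eq_norm] using hS x y)
  have hdenoiser_pos : 0 < (1 - θ) / θ := div_pos (sub_pos.2 hθ.2) hθ.1
  have hTavg := hdenoiser.comp hstep hstep_pos.le hdenoiser_pos.le
  rw [show D ∘ (fun x => x - ρ⁻¹ • f' x) = T from (funext hT).symm] at hTavg
  exact hTavg.exists_tendsto_iterate_isFixedPt (div_pos (lt_min hstep_pos hdenoiser_pos) two_pos)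
    hfix x₀
end

section
/- Fix ρ > 0 and initializations y₀, z₀, and let (x_k, y_k, z_k)_{k≥1} be the PnP-ADMM iterates x_{k+1} = Prox_{ρ⁻¹f}(y_k − z_k), y_{k+1} = D(x_{k+1} + z_k), z_{k+1} = z_k + x_{k+1} − y_{k+1}. Define u₁ = y₁ + z₁ and u_k = T(u_{k−1}) for k ≥ 2, where T = ½I + ½(2Prox_{ρ⁻¹f} − I)∘(2D − I). Then for all k ≥ 1: y_k = D(u_k), z_k = (I − D)(u_k), and x_{k+1} = Prox_{ρ⁻¹f}((2D − I)(u_k)). -/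
/-!
Put `w_k = x_k + z_{k-1}`. One ADMM step gives `y_k = D w_k`, `z_k = w_k - D w_k`, hence
`y_k - z_k = 2 D w_k - w_k` and `x_{k+1} = P (2 D w_k - w_k)`. Since
`T v = P (2 D v - v) + (v - D v)`, this says exactly `T w_k = x_{k+1} + z_k = w_{k+1}`;
as `u_1 = w_1`, induction gives `u_k = w_k` for all `k ≥ 1`.
-/

section

variable {E : Type*} [AddCommGroup E] [Module ℝ E]

theorem douglasRachford_apply {P D T : E → E}
    (hT : ∀ v, T v = (1/2 : ℝ) • v
        + (1/2 : ℝ) • ((2 : ℝ) • P ((2 : ℝ) • D v - v) - ((2 : ℝ) • D v - v)))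
    (v : E) : T v = P ((2 : ℝ) • D v - v) + (v - D v) := by
  rw [hT]
  module

theorem admm_succ_eq {P D : E → E} {x y z : ℕ → E}
    (hx : ∀ k, x (k+1) = P (y k - z k))
    (hy : ∀ k, y (k+1) = D (x (k+1) + z k))
    (hz : ∀ k, z (k+1) = z k + x (k+1) - y (k+1)) (k : ℕ) :
    let w := x (k+1) + z k
    y (k+1) = D w ∧ z (k+1) = w - D w ∧ x (k+2) = P ((2 : ℝ) • D w - w) := by
  intro w
  have hy' : y (k+1) = D w := hy k
  have hz' : z (k+1) = w - D w := by
    rw [hz k, hy', add_comm (z k)]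
  refine ⟨hy', hz', ?_⟩
  rw [hx (k+1), hy', hz', two_smul]
  congr 1
  abel

end

theorem stmt12_general {H : Type*} [NormedAddCommGroup H] [InnerProductSpace ℝ H]
    (P : H → H)
    (D : H → H) (T : H → H)
    (hT : ∀ v, T v = (1/2 : ℝ) • v
        + (1/2 : ℝ) • ((2 : ℝ) • P ((2 : ℝ) • D v - v) - ((2 : ℝ) • D v - v)))
    (x y z u : ℕ → H)
    (hx : ∀ k, x (k+1) = P (y k - z k))
    (hy : ∀ k, y (k+1) = D (x (k+1) + z k))
    (hz : ∀ k, z (k+1) = z k + x (k+1) - y (k+1))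
    (hu1 : u 1 = y 1 + z 1)
    (hu : ∀ k ≥ 1, u (k+1) = T (u k)) :
    ∀ k ≥ 1, y k = D (u k) ∧ z k = u k - D (u k)
      ∧ x (k+1) = P ((2 : ℝ) • D (u k) - u k) := by
  have hstep := admm_succ_eq hx hy hz
  have hu_eq : ∀ k, u (k+1) = x (k+1) + z k := by
    intro k
    induction k with
    | zero =>
      rw [hu1, hz 0]
      abel
    | succ k ih =>
      obtain ⟨-, hzk, hxk⟩ := hstep k
      rw [hu (k+1) k.succ_pos, douglasRachford_apply hT, ih, ← hxk, ← hzk]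
  rintro (_ | k) hk
  · cases hk
  · rw [hu_eq k]
    exact hstep k

/-- Douglas–Rachford reformulation of PnP-ADMM: with u₁ = y₁ + z₁ and
u_{k+1} = T(u_k) for T = ½I + ½(2Prox_{ρ⁻¹f} − I)∘(2D − I), the ADMM iterates
satisfy y_k = D(u_k), z_k = (I − D)(u_k), x_{k+1} = Prox_{ρ⁻¹f}((2D − I)(u_k)). -/
theorem stmt12 {H : Type*} [NormedAddCommGroup H] [InnerProductSpace ℝ H]
    (f : H → ℝ) (hconv : ConvexOn ℝ Set.univ f) (ρ : ℝ) (hρ : 0 < ρ)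
    (P : H → H)
    (hP : ∀ x y : H, ρ⁻¹ * f (P x) + ‖P x - x‖ ^ 2 / 2
        ≤ ρ⁻¹ * f y + ‖y - x‖ ^ 2 / 2)
    (D : H → H) (T : H → H)
    (hT : ∀ v, T v = (1/2 : ℝ) • v
        + (1/2 : ℝ) • ((2 : ℝ) • P ((2 : ℝ) • D v - v) - ((2 : ℝ) • D v - v)))
    (x y z u : ℕ → H)
    (hx : ∀ k, x (k+1) = P (y k - z k))
    (hy : ∀ k, y (k+1) = D (x (k+1) + z k))
    (hz : ∀ k, z (k+1) = z k + x (k+1) - y (k+1))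
    (hu1 : u 1 = y 1 + z 1)
    (hu : ∀ k ≥ 1, u (k+1) = T (u k)) :
    ∀ k ≥ 1, y k = D (u k) ∧ z k = u k - D (u k)
      ∧ x (k+1) = P ((2 : ℝ) • D (u k) - u k) :=
  stmt12_general P D T hT x y z u hx hy hz hu1 hu
end

section
/- Let K ∈ R^{n×n} be symmetric positive definite, D a diagonal matrix with positive diagonal entries, and let W = D⁻¹K. Equip R^n with the inner product ⟨x, y⟩ = xᵀDy. Then W is self-adjoint w.r.t. ⟨·,·⟩, and the map x ↦ Wx equals the proximal operator on (R^n, ⟨·,·⟩) of the convex quadratic g(x) = ½ xᵀ D(K⁻¹D − I) x, provided the eigenvalues of W lie in (0,1] (e.g., when D_{ii} = Σ_j K_{ij} and K is entrywise nonnegative). -/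
/-!
With `M = D K⁻¹ D`, which is positive definite, the proximal objective is
`g y + ½ ⟨y - x, y - x⟩ = ½ yᵀ M y - yᵀ D x + ½ xᵀ D x`. Since `M (D⁻¹ K) = D`, completing the
square around `W x = D⁻¹ K x` gives `½ (y - W x)ᵀ M (y - W x)` plus a term independent of `y`,
so `W x` is the unique minimizer. Self-adjointness of `W` is `D W = K` with `K` symmetric.
-/

open Matrix

namespace Matrix

section Quadratic

variable {n : Type*} [Fintype n]

lemma IsHermitian.dotProduct_mulVec_comm {A : Matrix n n ℝ} (hA : A.IsHermitian)
    (u v : n → ℝ) : u ⬝ᵥ A *ᵥ v = v ⬝ᵥ A *ᵥ u := by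
  rw [dotProduct_mulVec, ← mulVec_transpose, ← conjTranspose_eq_transpose_of_trivial, hA.eq,
    dotProduct_comm]

lemma IsHermitian.sub_dotProduct_mulVec_sub {A : Matrix n n ℝ} (hA : A.IsHermitian)
    (u v : n → ℝ) :
    (u - v) ⬝ᵥ A *ᵥ (u - v) = u ⬝ᵥ A *ᵥ u - 2 * (u ⬝ᵥ A *ᵥ v) + v ⬝ᵥ A *ᵥ v := by
  simp only [mulVec_sub, dotProduct_sub, sub_dotProduct, hA.dotProduct_mulVec_comm v u]
  ring

lemma IsHermitian.quadratic_eq_add_of_mulVec_eq {M : Matrix n n ℝ} (hM : M.IsHermitian)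
    {b z : n → ℝ} (hz : M *ᵥ z = b) (y : n → ℝ) :
    y ⬝ᵥ M *ᵥ y / 2 - y ⬝ᵥ b
      = z ⬝ᵥ M *ᵥ z / 2 - z ⬝ᵥ b + (y - z) ⬝ᵥ M *ᵥ (y - z) / 2 := by
  rw [hM.sub_dotProduct_mulVec_sub, ← hz, hM.dotProduct_mulVec_comm z]
  ring

end Quadratic

variable {n : Type*} [Fintype n] [DecidableEq n] {K D : Matrix n n ℝ}

lemma PosDef.mul_inv_mul (hK : K.PosDef) (hD : D.PosDef) : (D * K⁻¹ * D).PosDef := by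
  have h := hK.inv.conjTranspose_mul_mul_same (mulVec_injective_iff_isUnit.2 hD.isUnit)
  rwa [hD.isHermitian.eq] at h

lemma PosDef.mul_inv_mul_mul_inv_mul (hK : K.PosDef) (hD : D.PosDef) :
    D * K⁻¹ * D * (D⁻¹ * K) = D := by
  rw [Matrix.mul_assoc, mul_nonsing_inv_cancel_left _ _ ((isUnit_iff_isUnit_det D).1 hD.isUnit),
    Matrix.mul_assoc, nonsing_inv_mul _ ((isUnit_iff_isUnit_det K).1 hK.isUnit), Matrix.mul_one]

lemma PosDef.inv_mul_mulVec_dotProduct_mulVec (hD : D.PosDef) (hK : K.IsHermitian)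
    (x y : n → ℝ) : (D⁻¹ * K) *ᵥ x ⬝ᵥ D *ᵥ y = x ⬝ᵥ D *ᵥ ((D⁻¹ * K) *ᵥ y) := by
  have hDW : D * (D⁻¹ * K) = K :=
    mul_nonsing_inv_cancel_left _ _ ((isUnit_iff_isUnit_det D).1 hD.isUnit)
  rw [hD.isHermitian.dotProduct_mulVec_comm, mulVec_mulVec, mulVec_mulVec, hDW,
    hK.dotProduct_mulVec_comm]

end Matrix

variable {n : Type*} [Fintype n] [DecidableEq n] {K D : Matrix n n ℝ}

/-- `y ↦ g y + ½ ⟨y - x, y - x⟩_D` with `g y = ½ yᵀ D (K⁻¹ D - 1) y`. -/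
noncomputable def proxObjective (K D : Matrix n n ℝ) (x y : n → ℝ) : ℝ :=
  (1/2) * (y ⬝ᵥ (D * (K⁻¹ * D - 1)) *ᵥ y) + (y - x) ⬝ᵥ D *ᵥ (y - x) / 2

lemma proxObjective_eq (hD : D.IsHermitian) (x y : n → ℝ) :
    proxObjective K D x y
      = y ⬝ᵥ (D * K⁻¹ * D) *ᵥ y / 2 - y ⬝ᵥ D *ᵥ x + x ⬝ᵥ D *ᵥ x / 2 := by
  rw [proxObjective, Matrix.mul_sub, Matrix.mul_one, ← Matrix.mul_assoc, sub_mulVec,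
    dotProduct_sub, hD.sub_dotProduct_mulVec_sub]
  ring

lemma proxObjective_eq_add (hK : K.PosDef) (hD : D.PosDef) (x y : n → ℝ) :
    proxObjective K D x y
      = proxObjective K D x ((D⁻¹ * K) *ᵥ x)
        + (y - (D⁻¹ * K) *ᵥ x) ⬝ᵥ (D * K⁻¹ * D) *ᵥ (y - (D⁻¹ * K) *ᵥ x) / 2 := by
  have hMW : (D * K⁻¹ * D) *ᵥ ((D⁻¹ * K) *ᵥ x) = D *ᵥ x := by
    rw [mulVec_mulVec, hK.mul_inv_mul_mul_inv_mul hD]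
  rw [proxObjective_eq hD.isHermitian, proxObjective_eq hD.isHermitian,
    (hK.mul_inv_mul hD).isHermitian.quadratic_eq_add_of_mulVec_eq hMW]
  ring

lemma proxObjective_inv_mul_mulVec_le (hK : K.PosDef) (hD : D.PosDef) (x y : n → ℝ) :
    proxObjective K D x ((D⁻¹ * K) *ᵥ x) ≤ proxObjective K D x y := by
  have h := (hK.mul_inv_mul hD).posSemidef.dotProduct_mulVec_nonneg (y - (D⁻¹ * K) *ᵥ x)
  rw [star_trivial] at h
  linarith [proxObjective_eq_add hK hD x y]

lemma eq_inv_mul_mulVec_of_forall_proxObjective_le (hK : K.PosDef) (hD : D.PosDef)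
    {x p : n → ℝ} (hp : ∀ y, proxObjective K D x p ≤ proxObjective K D x y) :
    p = (D⁻¹ * K) *ᵥ x := by
  by_contra hne
  have h := (hK.mul_inv_mul hD).dotProduct_mulVec_pos (sub_ne_zero.2 hne)
  rw [star_trivial] at h
  linarith [hp ((D⁻¹ * K) *ᵥ x), proxObjective_eq_add hK hD x p]

theorem stmt17_general {n : ℕ} (K : Matrix (Fin n) (Fin n) ℝ) (hK : K.PosDef)
    (d : Fin n → ℝ) (hd : ∀ i, 0 < d i)
    (W : Matrix (Fin n) (Fin n) ℝ)
    (hW : W = (Matrix.diagonal d)⁻¹ * K) :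
    let Dm := Matrix.diagonal d
    let ip : (Fin n → ℝ) → (Fin n → ℝ) → ℝ := fun x y => x ⬝ᵥ Dm.mulVec y
    let g : (Fin n → ℝ) → ℝ :=
      fun x => (1/2) * (x ⬝ᵥ (Dm * (K⁻¹ * Dm - 1)).mulVec x)
    (∀ x y, ip (W.mulVec x) y = ip x (W.mulVec y)) ∧
    (∀ x y : Fin n → ℝ,
      g (W.mulVec x) + ip (W.mulVec x - x) (W.mulVec x - x) / 2
        ≤ g y + ip (y - x) (y - x) / 2) ∧
    (∀ x p : Fin n → ℝ,
      (∀ y, g p + ip (p - x) (p - x) / 2 ≤ g y + ip (y - x) (y - x) / 2) →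
        p = W.mulVec x) := by
  intro Dm ip g
  have hD : Dm.PosDef := PosDef.diagonal hd
  subst hW
  exact ⟨hD.inv_mul_mulVec_dotProduct_mulVec hK.isHermitian,
    proxObjective_inv_mul_mulVec_le hK hD,
    fun _ _ hp => eq_inv_mul_mulVec_of_forall_proxObjective_le hK hD hp⟩

/-- For K symmetric positive definite, D diagonal with positive entries,
W = D⁻¹K, and the inner product ⟨x, y⟩ = xᵀDy: W is self-adjoint, and (if the
eigenvalues of W lie in (0,1]) the map x ↦ Wx is the proximal operator of the
convex quadratic g(x) = ½ xᵀ D(K⁻¹D − I) x. -/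
theorem stmt17 {n : ℕ} (K : Matrix (Fin n) (Fin n) ℝ) (hK : K.PosDef)
    (d : Fin n → ℝ) (hd : ∀ i, 0 < d i)
    (W : Matrix (Fin n) (Fin n) ℝ)
    (hW : W = (Matrix.diagonal d)⁻¹ * K)
    (heig : ∀ μ ∈ spectrum ℝ W, μ ∈ Set.Ioc (0 : ℝ) 1) :
    let Dm := Matrix.diagonal d
    let ip : (Fin n → ℝ) → (Fin n → ℝ) → ℝ := fun x y => x ⬝ᵥ Dm.mulVec y
    let g : (Fin n → ℝ) → ℝ :=
      fun x => (1/2) * (x ⬝ᵥ (Dm * (K⁻¹ * Dm - 1)).mulVec x)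
    (∀ x y, ip (W.mulVec x) y = ip x (W.mulVec y)) ∧
    (∀ x y : Fin n → ℝ,
      g (W.mulVec x) + ip (W.mulVec x - x) (W.mulVec x - x) / 2
        ≤ g y + ip (y - x) (y - x) / 2) ∧
    (∀ x p : Fin n → ℝ,
      (∀ y, g p + ip (p - x) (p - x) / 2 ≤ g y + ip (y - x) (y - x) / 2) →
        p = W.mulVec x) :=
  stmt17_general K hK d hd W hW
end

section
/- Let x₁, …, x_N be distinct points in R^d and c₁, …, c_N real numbers, not all zero. Then the function h : R^d → C defined by h(ω) = Σ_k c_k exp(i⟨ω, x_k⟩) is nonzero for almost every ω ∈ R^d (w.r.t. Lebesgue measure). -/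
open MeasureTheory Function Complex

/-!
Pick a direction `v` along which the points `x k` have distinct projections `⟪v, x k⟫`; it exists
because a real vector space is not a finite union of the proper hyperplanes `(x j - x k)ᗮ`. On
each line `ω + ℝ v` the function becomes a one-variable exponential sum with distinct frequencies
`⟪v, x k⟫` and nonzero coefficients; by Dedekind's independence of characters it is not identically
zero, and being real-analytic its zeros are isolated, hence countable. Fubini along the lines and
translation invariance of Lebesgue measure then give a null zero set.
-/

theorem cexp_I_mul_frequency_injective :
    Injective fun (a t : ℝ) => cexp (I * ↑(t * a)) := by
  intro a b hab
  by_contra hne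
  -- at `t = π / (a - b)` the two exponentials differ by the factor `exp (π I) = -1`
  have hsub : a - b ≠ 0 := sub_ne_zero.2 hne
  have h : cexp (I * ↑(Real.pi / (a - b) * a)) = cexp (I * ↑(Real.pi / (a - b) * b)) :=
    congr_fun hab _
  have hshift : Real.pi / (a - b) * a = Real.pi / (a - b) * b + Real.pi := by
    field_simp; ring
  rw [hshift, ofReal_add, mul_add, exp_add, mul_comm I ↑Real.pi, exp_pi_mul_I] at h
  exact exp_ne_zero _ (by linear_combination -h / 2)

theorem linearIndependent_cexp_I_mul_frequency :
    LinearIndependent ℂ fun (a t : ℝ) => cexp (I * ↑(t * a)) := by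
  let χ : ℝ → Multiplicative ℝ →* ℂ := fun a =>
    { toFun t := cexp (I * ↑(t.toAdd * a))
      map_one' := by simp
      map_mul' s t := by simp only [toAdd_mul, add_mul, ofReal_add, mul_add, exp_add] }
  have hχ : Injective χ := fun a b hab =>
    cexp_I_mul_frequency_injective (funext fun t => DFunLike.congr_fun hab (.ofAdd t))
  exact (linearIndependent_monoidHom (Multiplicative ℝ) ℂ).comp χ hχ

theorem ae_sum_mul_cexp_I_mul_ne_zero {ι : Type*} [Fintype ι] {a : ι → ℝ} (ha : Injective a)
    {b : ι → ℂ} (hb : b ≠ 0) :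
    ∀ᵐ t : ℝ, ∑ k, b k * cexp (I * ↑(t * a k)) ≠ 0 := by
  let f : ℝ → ℂ := fun t => ∑ k, b k * cexp (I * ↑(t * a k))
  have hf : AnalyticOnNhd ℝ f Set.univ := fun t _ =>
    Finset.analyticAt_fun_sum _ fun k _ => analyticAt_const.mul <| analyticAt_cexp.restrictScalars.comp <|
      analyticAt_const.mul <| (ofRealCLM.analyticAt _).comp (analyticAt_id.mul analyticAt_const)
  obtain ⟨t₀, ht₀⟩ : ∃ t, f t ≠ 0 := by
    by_contra! hf0
    refine hb (funext <| Fintype.linearIndependent_iff.1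
      (linearIndependent_cexp_I_mul_frequency.comp a ha) b (funext fun t => ?_))
    simpa [f] using hf0 t
  have := ae_restrict_le_codiscreteWithin (μ := volume) MeasurableSet.univ
    (hf.preimage_zero_mem_codiscrete ht₀)
  rwa [Measure.restrict_univ] at this

theorem exists_injective_inner {E ι : Type*} [NormedAddCommGroup E] [InnerProductSpace ℝ E]
    [Finite ι] {x : ι → E} (hx : Injective x) :
    ∃ v : E, Injective fun k => inner ℝ v (x k) := by
  by_contra! h
  let P : {p : ι × ι // p.1 ≠ p.2} → Submodule ℝ E := fun p => (ℝ ∙ (x p.1.1 - x p.1.2))ᗮ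
  have hcover : ⋃ p, (P p : Set E) = Set.univ := by
    refine Set.eq_univ_of_forall fun v => ?_
    obtain ⟨i, j, hij, hne⟩ := Function.not_injective_iff.1 (h v)
    refine Set.mem_iUnion.2 ⟨⟨(i, j), hne⟩, ?_⟩
    simp [P, Submodule.mem_orthogonal_singleton_iff_inner_right, inner_sub_left,
      real_inner_comm, hij]
  obtain ⟨⟨⟨i, j⟩, hne⟩, htop⟩ := Subspace.exists_eq_top_of_iUnion_eq_univ hcover
  simp [P, Submodule.orthogonal_eq_top_iff, sub_eq_zero] at htop
  exact hne (hx htop)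

theorem ae_of_ae_lines {E : Type*} [AddCommGroup E] [Module ℝ E] [MeasurableSpace E]
    [MeasurableAdd₂ E] [MeasurableSMul₂ ℝ E] (μ : Measure E) [SFinite μ] [μ.IsAddRightInvariant]
    (v : E) {p : E → Prop} (hp : MeasurableSet {x | p x})
    (h : ∀ᵐ x ∂μ, ∀ᵐ t : ℝ, p (x + t • v)) :
    ∀ᵐ x ∂μ, p x := by
  have hlines : MeasurableSet {z : E × ℝ | p (z.1 + z.2 • v)} :=
    hp.preimage (by fun_prop : Measurable fun z : E × ℝ => z.1 + z.2 • v)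
  -- Fubini: for some `t`, almost every `x` has `p (x + t • v)`; translation invariance removes `t`
  obtain ⟨t, ht⟩ := ((Measure.ae_ae_comm hlines).1 h).exists
  rw [← map_add_right_eq_self μ (t • v)]
  exact (ae_map_iff (measurable_add_const _).aemeasurable hp).2 ht

/-- A nontrivial finite linear combination of distinct complex exponentials
ω ↦ Σ_k c_k exp(i⟨ω, x_k⟩) is nonzero for almost every ω. -/
theorem stmt19 {d N : ℕ} (x : Fin N → EuclideanSpace ℝ (Fin d))
    (hx : Function.Injective x)
    (c : Fin N → ℝ) (hc : c ≠ 0) :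
    ∀ᵐ ω : EuclideanSpace ℝ (Fin d) ∂volume,
      (∑ k, (c k : ℂ) * Complex.exp (Complex.I * ((inner ℝ ω (x k) : ℝ) : ℂ))) ≠ 0 := by
  obtain ⟨v, hv⟩ := exists_injective_inner hx
  have hmeas : MeasurableSet {ω : EuclideanSpace ℝ (Fin d) |
      ∑ k, (c k : ℂ) * cexp (I * ↑(inner ℝ ω (x k))) ≠ 0} :=
    (measurableSet_singleton 0).compl.preimage (by fun_prop)
  refine ae_of_ae_lines volume v hmeas (ae_of_all _ fun ω => ?_)
  have hb : (fun k => (c k : ℂ) * cexp (I * ↑(inner ℝ ω (x k)))) ≠ 0 := by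
    obtain ⟨k, hk⟩ := Function.ne_iff.1 hc
    exact Function.ne_iff.2 ⟨k, mul_ne_zero (ofReal_ne_zero.2 hk) (exp_ne_zero _)⟩
  filter_upwards [ae_sum_mul_cexp_I_mul_ne_zero hv hb] with t ht
  simpa [inner_add_left, real_inner_smul_left, mul_add, exp_add, mul_assoc] using ht
end
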